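/- Let B be a reflective subinstance of A and k a maximal atom of A. Then C_k is a reflective subinstance of B if and only if there exist a homomorphism f: B→C_k and an atom k' of B with f(k')=k. -/
import Mathlib


/-- An atom (fact): relation name together with a tuple of values. -/
abbrev Atom : Type := ℕ × List ℕ

/-- A (finite) instance: a finite set of atoms. -/
@[ext] structure Inst where
  atoms : Finset Atom
deriving DecidableEq

/-- The active domain of an instance. -/
def adom (A : Inst) : Set ℕ := {x | ∃ a ∈ A.atoms, x ∈ a.2}

/-- The action of a map on values extended to atoms. -/
def mapAtom (h : ℕ → ℕ) (a : Atom) : Atom := (a.1, a.2.map h)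

/-- A homomorphism between instances, fixing the constants `Cst`. -/
structure Hom (Cst : Set ℕ) (A B : Inst) where
  toFun : ℕ → ℕ
  fixes : ∀ c ∈ Cst, toFun c = c
  maps : ∀ a ∈ A.atoms, mapAtom toFun a ∈ B.atoms

/-- Composition of homomorphisms. -/
def Hom.comp {Cst : Set ℕ} {A B C : Inst} (g : Hom Cst B C) (f : Hom Cst A B) :
    Hom Cst A C where
  toFun := g.toFun ∘ f.toFun
  fixes := by intro c hc; simp [f.fixes c hc, g.fixes c hc]
  maps := by
    intro a ha
    have := g.maps _ (f.maps a ha)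
    simpa [mapAtom, List.map_map] using this

/-- A homomorphism is an isomorphism if it has a two-sided inverse on active domains. -/
def IsIso {Cst : Set ℕ} {A B : Inst} (h : Hom Cst A B) : Prop :=
  ∃ g : Hom Cst B A,
    (∀ x ∈ adom A, g.toFun (h.toFun x) = x) ∧ (∀ x ∈ adom B, h.toFun (g.toFun x) = x)

/-- Two instances are isomorphic. -/
def Isomorphic (Cst : Set ℕ) (A B : Inst) : Prop := ∃ h : Hom Cst A B, IsIso h

/-- A set of homomorphisms is a cover if every atom of the codomain is hit. -/
def IsCover {Cst : Set ℕ} {A B : Inst} (H : Set (Hom Cst A B)) : Prop :=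
  ∀ b ∈ B.atoms, ∃ h ∈ H, ∃ a ∈ A.atoms, mapAtom h.toFun a = b

/-- PCWA-equivalence: covers exist in both directions. -/
def PCWAEquiv (Cst : Set ℕ) (A B : Inst) : Prop :=
  (∃ H : Set (Hom Cst A B), IsCover H) ∧ (∃ G : Set (Hom Cst B A), IsCover G)

/-- `A` is a PCWA-core if every self-cover contains an isomorphism. -/
def PCWACore (Cst : Set ℕ) (A : Inst) : Prop :=
  ∀ H : Set (Hom Cst A A), IsCover H → ∃ h ∈ H, IsIso h

/-- `C` is a reflective subinstance of `B` (up to isomorphism):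
an injective homomorphism `m : C → B` with a retraction `q : B → C`. -/
def ReflSub (Cst : Set ℕ) (C B : Inst) : Prop :=
  ∃ m : Hom Cst C B, ∃ q : Hom Cst B C,
    Set.InjOn m.toFun (adom C) ∧ ∀ x ∈ adom C, q.toFun (m.toFun x) = x

/-- `C` is a strict reflective subinstance of `A`: an actual subinstance
together with a retraction that is the identity on `C`'s domain. -/
def StrictReflSub (Cst : Set ℕ) (C A : Inst) : Prop :=
  C.atoms ⊆ A.atoms ∧ ∃ q : Hom Cst A C, ∀ x ∈ adom C, q.toFun x = x

/-- `k` is an endomorphism-maximal atom of `A`. -/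
def MaxAtom (Cst : Set ℕ) (A : Inst) (k : Atom) : Prop :=
  k ∈ A.atoms ∧ ∀ k' ∈ A.atoms, ∀ f : Hom Cst A A, mapAtom f.toFun k' = k →
    ∃ g : Hom Cst A A, mapAtom g.toFun k = k'

/-- `C` is the core of `A` with respect to the atom `k`:
the least strict reflective subinstance of `A` containing `k`. -/
def IsCoreAt (Cst : Set ℕ) (A : Inst) (k : Atom) (C : Inst) : Prop :=
  StrictReflSub Cst C A ∧ k ∈ C.atoms ∧
    ∀ D : Inst, StrictReflSub Cst D A → k ∈ D.atoms → StrictReflSub Cst C D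

/-- The inclusion homomorphism of a subinstance. -/
def inclHom (Cst : Set ℕ) {C A : Inst} (hsub : C.atoms ⊆ A.atoms) : Hom Cst C A where
  toFun := id
  fixes := fun _ _ => rfl
  maps := by intro a ha; simpa [mapAtom] using hsub ha

/-- A strongly surjective homomorphism: every atom of the codomain is the image of an atom. -/
def StrongSurj {Cst : Set ℕ} {A B : Inst} (h : Hom Cst A B) : Prop :=
  ∀ b ∈ B.atoms, ∃ a ∈ A.atoms, mapAtom h.toFun a = b

/-- The image instance of `A` under the value map `f`. -/
def imageInst (f : ℕ → ℕ) (A : Inst) : Inst := ⟨A.atoms.image (mapAtom f)⟩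

/-- The union of a finite family of instances. -/
def unionInst (F : Finset Inst) : Inst := ⟨F.sup Inst.atoms⟩

/-- The members of `F` share no nulls: any value in two distinct members is a constant. -/
def nullsDisjoint (Cst : Set ℕ) (F : Finset Inst) : Prop :=
  ∀ E ∈ F, ∀ E' ∈ F, E ≠ E' → adom E ∩ adom E' ⊆ Cst

/-- `F` is the multicore of `A`: each member is (isomorphic to) a core of `A`
at some maximal atom, every core at a maximal atom is a reflective subinstance
of some member, and no member is a reflective subinstance of another. -/
def IsMulticore (Cst : Set ℕ) (A : Inst) (F : Finset Inst) : Prop :=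
  (∀ E ∈ F, ∃ k C, MaxAtom Cst A k ∧ IsCoreAt Cst A k C ∧ Isomorphic Cst E C) ∧
  (∀ k C, MaxAtom Cst A k → IsCoreAt Cst A k C → ∃ E ∈ F, ReflSub Cst C E) ∧
  (∀ E ∈ F, ∀ E' ∈ F, ReflSub Cst E E' → E = E')

lemma mapAtom_comp' (g f : ℕ → ℕ) (a : Atom) :
    mapAtom g (mapAtom f a) = mapAtom (fun x => g (f x)) a := by
  simp [mapAtom, Function.comp]

lemma mapAtom_congr' {a : Atom} {f g : ℕ → ℕ} (h : ∀ x ∈ a.2, f x = g x) :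
    mapAtom f a = mapAtom g a := by
  unfold mapAtom
  exact congrArg _ (List.map_congr_left h)

lemma mapAtom_id' {a : Atom} {f : ℕ → ℕ} (h : ∀ x ∈ a.2, f x = x) :
    mapAtom f a = a := by
  rw [mapAtom_congr' h]; simp [mapAtom]

lemma mem_adom {A : Inst} {a : Atom} (ha : a ∈ A.atoms) {x : ℕ} (hx : x ∈ a.2) :
    x ∈ adom A := ⟨a, ha, hx⟩

/-- `C_k` is a reflective subinstance of `B` iff some
homomorphism `B → C_k` hits `k`. -/
theorem coreAt_reflsub_iff_hit (Cst : Set ℕ) (A B C : Inst) (k : Atom)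
    (hB : ReflSub Cst B A)
    (hmax : MaxAtom Cst A k) (hC : IsCoreAt Cst A k C)
    (hfix : ∀ h : Hom Cst C C, mapAtom h.toFun k = k → IsIso h) :
    ReflSub Cst C B ↔
      ∃ f : Hom Cst B C, ∃ k' ∈ B.atoms, mapAtom f.toFun k' = k := by
  obtain ⟨mB, qA, _, hqm⟩ := hB
  obtain ⟨⟨hCsub, _⟩, hkC, _⟩ := hC
  constructor
  · rintro ⟨m', q', _, hqm'⟩
    refine ⟨q', mapAtom m'.toFun k, m'.maps k hkC, ?_⟩
    rw [mapAtom_comp']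
    exact mapAtom_id' (fun x hx => hqm' x (mem_adom hkC hx))
  · rintro ⟨f, k', hk'B, hfk⟩
    set incl := inclHom Cst hCsub with hincl
    set φ : Hom Cst A A := (incl.comp f).comp qA with hφdef
    have hφ : mapAtom φ.toFun (mapAtom mB.toFun k') = k := by
      rw [mapAtom_comp']
      have : mapAtom (fun x => φ.toFun (mB.toFun x)) k' = mapAtom f.toFun k' := by
        apply mapAtom_congr'
        intro x hx
        show incl.toFun (f.toFun (qA.toFun (mB.toFun x))) = f.toFun x
        rw [hqm x (mem_adom hk'B hx)]; rfl
      rw [this, hfk]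
    obtain ⟨g, hg⟩ := hmax.2 (mapAtom mB.toFun k') (mB.maps k' hk'B) φ hφ
    set m' : Hom Cst C B := (qA.comp g).comp incl with hm'def
    have hm'k : mapAtom m'.toFun k = k' := by
      have h1 : mapAtom m'.toFun k = mapAtom qA.toFun (mapAtom g.toFun k) := by
        rw [mapAtom_comp']; rfl
      rw [h1, hg, mapAtom_comp']
      exact mapAtom_id' (fun x hx => hqm x (mem_adom hk'B hx))
    set e : Hom Cst C C := f.comp m' with hedef
    have hek : mapAtom e.toFun k = k := by
      have : mapAtom e.toFun k = mapAtom f.toFun (mapAtom m'.toFun k) := by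
        rw [mapAtom_comp']; rfl
      rw [this, hm'k, hfk]
    obtain ⟨ψ, hψ1, _⟩ := hfix e hek
    refine ⟨m', ψ.comp f, ?_, ?_⟩
    · intro x hx y hy hxy
      have hx' : (ψ.comp f).toFun (m'.toFun x) = x := hψ1 x hx
      have hy' : (ψ.comp f).toFun (m'.toFun y) = y := hψ1 y hy
      rw [← hx', ← hy', hxy]
    · intro x hx
      exact hψ1 x hx
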